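/- arXiv:1510.03611 — 2 statements merged into one kernel-verified Lean document; each statement's English description precedes it below -/
import Mathlib

section
/- Plücker quadratic relation (type a): Let Z be the generic upper unitriangular (n+1)×(n+1) matrix, Z^{cut} the n+1 × n matrix obtained by deleting its last column, U the generic upper unitriangular n×n matrix in independent variables u_{ij}, and U^{ext} the n×(n+1) matrix obtained by appending a zero column to U. For 1 ≤ α ≤ n define Φ_α = det of the (n+1)×(n+1) matrix whose rows are the first n+1−α rows of Z followed by the first α rows of U^{ext}, and Ψ_α = det of the n×n matrix whose rows are the first n−α rows of Z^{cut} followed by the first α rows of U. Let R_{kl} denote the Zhelobenko operator in the u-variables. Then for m < α ≤ β: ∑_{j=α+1}^{β+1} (R_{mj} Φ_α)·(R_{j(β+1)} Ψ_β) = −Φ_α · (R_{m(β+1)} Ψ_β) + Φ_{β+1} · (R_{mα} Ψ_{α−1}), where by convention R_{αα}Ψ_{α−1} := −Ψ_{α−1}, R_{(β+1)(β+1)}Ψ_β := −Ψ_β, and Ψ_0 := −1. -/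
open MvPolynomial

/-- Polynomials in two families of variables: the entries `z_{ij}` (left summand,
1-based) of the generic upper unitriangular `(n+1) × (n+1)` matrix `Z`, and the
entries `u_{kl}` (right summand, 1-based) of the generic upper unitriangular
`n × n` matrix `U`. -/
abbrev Pzu : Type := MvPolynomial ((ℕ × ℕ) ⊕ (ℕ × ℕ)) ℂ

/-- The variable `z_{ij}`. -/
noncomputable def zv (i j : ℕ) : Pzu := X (Sum.inl (i, j))

/-- The variable `u_{ij}`. -/
noncomputable def uv (i j : ℕ) : Pzu := X (Sum.inr (i, j))

/-- The `j`-th entry of the `i`-th row (1-based) of the generic upper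
unitriangular matrix `Z`. -/
noncomputable def Zrow (i j : ℕ) : Pzu :=
  if i = j then 1 else if i < j then zv i j else 0

/-- The `j`-th entry of the `i`-th row (1-based) of the generic upper
unitriangular matrix `U`. -/
noncomputable def Urow (i j : ℕ) : Pzu :=
  if i = j then 1 else if i < j then uv i j else 0

/-- The `i`-th row of `U^{ext}`, i.e. of `U` with a zero `(n+1)`-st column
appended. -/
noncomputable def UextRow (n i j : ℕ) : Pzu :=
  if j ≤ n then Urow i j else 0

/-- The Zhelobenko operator `R^u_{kl} = ∂/∂u_{kl} + ∑_{j>l} u_{lj} ∂/∂u_{kj}`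
in the `u`-variables (which range over `1 ≤ i < j ≤ n`). -/
noncomputable def Ru (n k l : ℕ) (p : Pzu) : Pzu :=
  pderiv (Sum.inr (k, l)) p +
    ∑ j ∈ Finset.Icc (l + 1) n, uv l j * pderiv (Sum.inr (k, j)) p

/-- The Zhelobenko operator `R^z_{kl} = ∂/∂z_{kl} + ∑_{j>l} z_{lj} ∂/∂z_{kj}`
in the `z`-variables (which range over `1 ≤ i < j ≤ n+1`). -/
noncomputable def Rz (n k l : ℕ) (p : Pzu) : Pzu :=
  pderiv (Sum.inl (k, l)) p +
    ∑ j ∈ Finset.Icc (l + 1) (n + 1), zv l j * pderiv (Sum.inl (k, j)) p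

/-- `Φ_α`: the determinant of the `(n+1) × (n+1)` matrix whose rows are the
first `n+1−α` rows of `Z` followed by the first `α` rows of `U^{ext}`. -/
noncomputable def Phi (n α : ℕ) : Pzu :=
  Matrix.det (Matrix.of fun a b : Fin (n + 1) =>
    if (a : ℕ) + 1 ≤ n + 1 - α then Zrow ((a : ℕ) + 1) ((b : ℕ) + 1)
    else UextRow n ((a : ℕ) + 1 - (n + 1 - α)) ((b : ℕ) + 1))

/-- `Ψ_α`: the determinant of the `n × n` matrix whose rows are the first `n−α`
rows of `Z^{cut}` (`Z` with its last column deleted) followed by the first `α`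
rows of `U`. -/
noncomputable def Psi (n α : ℕ) : Pzu :=
  Matrix.det (Matrix.of fun a b : Fin n =>
    if (a : ℕ) + 1 ≤ n - α then Zrow ((a : ℕ) + 1) ((b : ℕ) + 1)
    else Urow ((a : ℕ) + 1 - (n - α)) ((b : ℕ) + 1))

/-!
Let `B` be the matrix of `Ψ_β` bordered by the row `e = (0, …, 0, 1)`, with rows
`Z_1, …, Z_{n-β}, U_1, …, U_β, e`, and `A` the matrix of `Φ_α`. Cramer's rule in row form,
`det B • w = ∑_r det (B[r := w]) • B_r` for `w = U_{β+1}`, substituted into the row `U_m` of `A`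
gives `Ψ_β · det (A[U_m := U_{β+1}]) = ∑_r det (A[U_m := B_r]) · det (B[r := U_{β+1}])`.
The Zhelobenko operator `R_{kl}` is a derivation that kills every row except `U_k`, which it
maps to `U_l`; hence `det (X[U_k := U_l]) = R_{kl} det X`. The rows `Z_i` and `U_j` (`j ≤ α`,
`j ≠ m`) of `B` repeat rows of `A` and contribute nothing, the rows `U_j` (`α < j ≤ β`) give the
sum, `U_m` gives `Φ_α · R_{m(β+1)} Ψ_β`, and `e` gives `Φ_{β+1} · (-R_{mα} Ψ_{α-1})`, the sign
coming from swapping `e` with the last row `U_α` of `A`.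
-/

open Matrix Finset

namespace Derivation

variable {R A : Type*} [CommRing R] [CommRing A] [Algebra R A] (D : Derivation R A A)

theorem map_finset_prod {ι : Type*} [DecidableEq ι] (s : Finset ι) (f : ι → A) :
    D (∏ i ∈ s, f i) = ∑ i ∈ s, (∏ j ∈ s.erase i, f j) * D (f i) := by
  induction s using Finset.induction_on with
  | empty => simp
  | insert a s ha ih =>
    rw [prod_insert ha, leibniz, ih, sum_insert ha, erase_insert ha, smul_eq_mul, smul_eq_mul,
      mul_sum, add_comm]
    congr 1
    refine sum_congr rfl fun i hi => ?_
    rw [erase_insert_of_ne (ne_of_mem_of_not_mem hi ha).symm,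
      prod_insert fun h => ha (mem_of_mem_erase h)]
    ring

theorem map_det_eq_sum_det_updateCol {ι : Type*} [Fintype ι] [DecidableEq ι] (M : Matrix ι ι A) :
    D M.det = ∑ c, (M.updateCol c fun r => D (M r c)).det := by
  simp only [det_apply, map_sum, Units.smul_def, map_zsmul, map_finset_prod, smul_sum]
  rw [sum_comm]
  refine sum_congr rfl fun c _ => sum_congr rfl fun σ _ => ?_
  rw [← mul_prod_erase univ _ (mem_univ c), mul_comm]
  congr 2
  · simp
  · exact prod_congr rfl fun j hj => by rw [updateCol_ne (ne_of_mem_erase hj)]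

theorem map_det_eq_sum_det_updateRow {ι : Type*} [Fintype ι] [DecidableEq ι] (M : Matrix ι ι A) :
    D M.det = ∑ r, (M.updateRow r fun c => D (M r c)).det := by
  rw [← det_transpose, map_det_eq_sum_det_updateCol]
  simp_rw [← det_transpose (M.updateRow _ _), ← updateCol_transpose]
  rfl

theorem map_det_eq_det_updateRow_of_map_eq_zero {ι : Type*} [Fintype ι] [DecidableEq ι]
    (M : Matrix ι ι A) (r₀ : ι) (h : ∀ r ≠ r₀, ∀ c, D (M r c) = 0) :
    D M.det = (M.updateRow r₀ fun c => D (M r₀ c)).det := by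
  rw [map_det_eq_sum_det_updateRow, sum_eq_single r₀ _ (by simp)]
  intro r _ hr
  exact det_eq_zero_of_row_eq_zero r fun c => by rw [updateRow_self, h r hr]

end Derivation

section Cramer
variable {R : Type*} [CommRing R] {ι : Type*} [Fintype ι] [DecidableEq ι]

theorem det_smul_eq_sum_det_updateRow_smul (B : Matrix ι ι R) (w : ι → R) :
    B.det • w = ∑ r, (B.updateRow r w).det • B r := by
  ext c
  have := congrFun (mulVec_cramer Bᵀ w) c
  simp only [mulVec, dotProduct, cramer_transpose_apply, transpose_apply, Pi.smul_apply,
    det_transpose, smul_eq_mul] at this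
  simp only [Pi.smul_apply, smul_eq_mul, Finset.sum_apply, ← this]
  exact sum_congr rfl fun r _ => mul_comm _ _

theorem det_mul_det_updateRow_eq_sum (A B : Matrix ι ι R) (p : ι) (w : ι → R) :
    B.det * (A.updateRow p w).det
      = ∑ r, (A.updateRow p (B r)).det * (B.updateRow r w).det := by
  rw [← det_updateRow_smul, det_smul_eq_sum_det_updateRow_smul]
  exact ((detRowAlternating : (ι → R) [⋀^ι]→ₗ[R] R).map_update_sum univ p _ A).trans
    (sum_congr rfl fun r _ => (det_updateRow_smul A p _ (B r)).trans (mul_comm _ _))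

theorem det_updateRow_updateRow_swap (M : Matrix ι ι R) {i j : ι} (hij : i ≠ j) (v : ι → R) :
    ((M.updateRow j v).updateRow i (M j)).det = -(M.updateRow i v).det := by
  have hswap : (M.updateRow j v).updateRow i (M j)
      = (M.updateRow i v).submatrix (Equiv.swap i j) id := by
    ext a b
    rcases eq_or_ne a i with rfl | hai
    · simp [hij.symm]
    rcases eq_or_ne a j with rfl | haj
    · simp [hai]
    · simp [updateRow_ne, hai, haj, Equiv.swap_apply_of_ne_of_ne]
  rw [hswap, det_permute, Equiv.Perm.sign_swap hij]
  simp

end Cramer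

theorem sum_range_eq_of_eq_zero {M : Type*} [AddCommMonoid M] (f : ℕ → M) {n z m α β : ℕ}
    (hm : 1 ≤ m) (hmα : m ≤ α) (hαβ : α ≤ β) (hn : z + β = n) (hz : ∀ i < z, f i = 0)
    (hu : ∀ j, 1 ≤ j → j ≤ α → j ≠ m → f (z + j - 1) = 0) :
    ∑ i ∈ range (n + 1), f i
      = f (z + m - 1) + ∑ j ∈ Icc (α + 1) β, f (z + j - 1) + f n := by
  subst hn
  obtain ⟨d, rfl⟩ := Nat.exists_eq_add_of_le hαβ
  rw [sum_range_succ, range_eq_Ico, ← sum_Ico_consecutive _ (Nat.zero_le z) (Nat.le_add_right z _),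
    sum_eq_zero fun i hi => hz i (mem_Ico.1 hi).2, zero_add, sum_Ico_eq_sum_range,
    Nat.add_sub_cancel_left, sum_range_add, ← Ico_add_one_right_eq_Icc, sum_Ico_eq_sum_range,
    show α + d + 1 - (α + 1) = d by omega]
  congr 2
  · rw [sum_eq_single (m - 1) (fun k hk hkm => ?_) (by simp; omega), Nat.add_sub_assoc hm]
    rw [show z + k = z + (k + 1) - 1 by omega]
    exact hu (k + 1) (by omega) (by rw [mem_range] at hk; omega) (by omega)
  · exact sum_congr rfl fun k _ => by congr 1; omega

noncomputable def ruDerivation (n k l : ℕ) : Derivation ℂ Pzu Pzu :=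
  pderiv (Sum.inr (k, l)) + ∑ j ∈ Icc (l + 1) n, uv l j • pderiv (Sum.inr (k, j))

theorem ruDerivation_apply (n k l : ℕ) (p : Pzu) : ruDerivation n k l p = Ru n k l p := by
  have hsum := congrFun (map_sum (Derivation.coeFnAddMonoidHom : Derivation ℂ Pzu Pzu →+ Pzu → Pzu)
    (fun j => uv l j • pderiv (Sum.inr (k, j))) (Icc (l + 1) n)) p
  simp only [Derivation.coeFnAddMonoidHom_apply, Finset.sum_apply, Derivation.smul_apply,
    smul_eq_mul] at hsum
  simp only [ruDerivation, Ru, Derivation.add_apply, hsum]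

theorem Ru_det_eq_det_updateRow {ι : Type*} [Fintype ι] [DecidableEq ι] {n k l : ℕ}
    (M : Matrix ι ι Pzu) (r₀ : ι) (h : ∀ r ≠ r₀, ∀ c, Ru n k l (M r c) = 0) :
    Ru n k l M.det = (M.updateRow r₀ fun c => Ru n k l (M r₀ c)).det := by
  simp only [← ruDerivation_apply] at h ⊢
  exact (ruDerivation n k l).map_det_eq_det_updateRow_of_map_eq_zero M r₀ h

theorem Ru_Zrow (n k l i j : ℕ) : Ru n k l (Zrow i j) = 0 := by
  unfold Zrow zv Ru
  split_ifs <;> simp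

theorem Ru_Urow_of_ne {i k : ℕ} (h : i ≠ k) (n l j : ℕ) : Ru n k l (Urow i j) = 0 := by
  unfold Urow uv Ru
  split_ifs <;> simp [h]

theorem Ru_Urow_self {n k l j : ℕ} (hkl : k < l) (hj : j ≤ n) : Ru n k l (Urow k j) = Urow l j := by
  rcases lt_trichotomy k j with hkj | rfl | hjk
  · simp only [Urow, Ru, hkj.ne, hkj, if_true, if_false, uv, pderiv_X, Pi.single_apply,
      Sum.inr.injEq, Prod.mk.injEq, true_and, mul_ite, mul_one, mul_zero]
    rcases lt_trichotomy l j with hlj | rfl | hjl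
    · simp [hlj, hlj.ne, hlj.ne', Nat.succ_le_of_lt hlj, hj]
    · simp
    · simp [hjl.ne, hjl.ne', not_lt.2 hjl.le]
  · simp [Urow, Ru, hkl.ne', not_lt.2 hkl.le]
  · simp [Urow, Ru, hjk.ne', not_lt.2 hjk.le, (hjk.trans hkl).ne', not_lt.2 (hjk.trans hkl).le]

noncomputable def zVec (n i : ℕ) : Fin (n + 1) → Pzu := fun c => Zrow i (c + 1)

noncomputable def uVec (n i : ℕ) : Fin (n + 1) → Pzu := fun c => UextRow n i (c + 1)

noncomputable def eVec (n : ℕ) : Fin (n + 1) → Pzu := Pi.single (Fin.last n) 1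

theorem Ru_uVec_of_ne {i k : ℕ} (h : i ≠ k) (n l : ℕ) (c : Fin (n + 1)) :
    Ru n k l (uVec n i c) = 0 := by
  unfold uVec UextRow
  split_ifs
  · exact Ru_Urow_of_ne h n l _
  · rw [← ruDerivation_apply, map_zero]

theorem Ru_uVec_self {n k l : ℕ} (hkl : k < l) (c : Fin (n + 1)) :
    Ru n k l (uVec n k c) = uVec n l c := by
  unfold uVec UextRow
  split_ifs with hc
  · exact Ru_Urow_self hkl hc
  · rw [← ruDerivation_apply, map_zero]

theorem Ru_eVec (n k l : ℕ) (c : Fin (n + 1)) : Ru n k l (eVec n c) = 0 := by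
  rw [← ruDerivation_apply, eVec, Pi.single_apply]
  split_ifs
  · exact Derivation.map_one_eq_zero _
  · exact map_zero _

noncomputable def zuMatrix (n z : ℕ) : Matrix (Fin (n + 1)) (Fin (n + 1)) Pzu :=
  of fun r => if (r : ℕ) < z then zVec n (r + 1) else uVec n (r + 1 - z)

noncomputable def psiMatrix (n β : ℕ) : Matrix (Fin (n + 1)) (Fin (n + 1)) Pzu :=
  (zuMatrix n (n - β)).updateRow (Fin.last n) (eVec n)

theorem zuMatrix_of_lt {n z : ℕ} {r : Fin (n + 1)} (h : (r : ℕ) < z) :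
    zuMatrix n z r = zVec n (r + 1) :=
  if_pos h

theorem zuMatrix_of_le {n z : ℕ} {r : Fin (n + 1)} (h : z ≤ r) :
    zuMatrix n z r = uVec n (r + 1 - z) :=
  if_neg (not_lt.2 h)

theorem psiMatrix_of_ne_last {n β : ℕ} {r : Fin (n + 1)} (h : r ≠ Fin.last n) :
    psiMatrix n β r = zuMatrix n (n - β) r :=
  updateRow_ne h

theorem psiMatrix_last (n β : ℕ) : psiMatrix n β (Fin.last n) = eVec n :=
  updateRow_self

theorem Phi_eq_det_zuMatrix (n α : ℕ) : Phi n α = (zuMatrix n (n + 1 - α)).det := by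
  unfold Phi
  congr 1
  ext r c
  simp only [zuMatrix, of_apply, Nat.lt_iff_add_one_le]
  split_ifs <;> rfl

theorem Psi_eq_det_psiMatrix (n β : ℕ) : Psi n β = (psiMatrix n β).det := by
  rw [det_succ_row _ (Fin.last n), sum_eq_single (Fin.last n) (fun c _ hc => by
    simp [psiMatrix, eVec, hc]) (by simp)]
  simp only [psiMatrix, updateRow_self, eVec, Pi.single_eq_same, Fin.succAbove_last, Fin.val_last,
    ← two_mul, pow_mul, neg_one_sq, one_pow, one_mul, Psi]
  congr 1
  refine Matrix.ext fun r c => ?_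
  simp only [submatrix_apply, updateRow_ne (Fin.castSucc_lt_last r).ne, zuMatrix, of_apply,
    Fin.val_castSucc, Nat.lt_iff_add_one_le]
  split_ifs
  · rfl
  · exact (if_pos (Nat.succ_le_of_lt c.isLt)).symm

theorem zuMatrix_eq_uVec {n z k : ℕ} {r : Fin (n + 1)} (hk : 1 ≤ k) (hr : (r : ℕ) = z + k - 1) :
    zuMatrix n z r = uVec n k := by
  rw [zuMatrix_of_le (by omega), show (r : ℕ) + 1 - z = k by omega]

theorem psiMatrix_eq_uVec {n β k : ℕ} {r : Fin (n + 1)} (hk : 1 ≤ k)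
    (hr : (r : ℕ) = n - β + k - 1) (hrn : (r : ℕ) < n) : psiMatrix n β r = uVec n k := by
  rw [psiMatrix_of_ne_last (Fin.ne_of_lt hrn), zuMatrix_eq_uVec hk hr]

theorem Ru_zuMatrix_of_ne {n z k l : ℕ} {r : Fin (n + 1)} (hr : (r : ℕ) ≠ z + k - 1)
    (c : Fin (n + 1)) : Ru n k l (zuMatrix n z r c) = 0 := by
  rcases lt_or_ge (r : ℕ) z with h | h
  · rw [zuMatrix_of_lt h]
    exact Ru_Zrow n k l _ _
  · rw [zuMatrix_of_le h]
    exact Ru_uVec_of_ne (by omega) n l c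

theorem Ru_det_zuMatrix {n z k l : ℕ} (hk : 1 ≤ k) (hkl : k < l) {p : Fin (n + 1)}
    (hp : (p : ℕ) = z + k - 1) :
    Ru n k l (zuMatrix n z).det = ((zuMatrix n z).updateRow p (uVec n l)).det := by
  rw [Ru_det_eq_det_updateRow _ p fun r hr =>
    Ru_zuMatrix_of_ne fun h => hr (Fin.ext (h.trans hp.symm))]
  simp_rw [zuMatrix_eq_uVec hk hp, Ru_uVec_self hkl]

theorem Ru_det_psiMatrix {n β k l : ℕ} (hk : 1 ≤ k) (hkl : k < l) {p : Fin (n + 1)}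
    (hp : (p : ℕ) = n - β + k - 1) (hpn : (p : ℕ) < n) :
    Ru n k l (psiMatrix n β).det = ((psiMatrix n β).updateRow p (uVec n l)).det := by
  have hrows : ∀ r ≠ p, ∀ c, Ru n k l (psiMatrix n β r c) = 0 := by
    intro r hr c
    rcases eq_or_ne r (Fin.last n) with rfl | hrl
    · rw [psiMatrix_last]
      exact Ru_eVec n k l c
    · rw [psiMatrix_of_ne_last hrl]
      exact Ru_zuMatrix_of_ne (fun h => hr (Fin.ext (h.trans hp.symm))) c
  rw [Ru_det_eq_det_updateRow _ p hrows]
  simp_rw [psiMatrix_eq_uVec hk hp hpn, Ru_uVec_self hkl]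

theorem Phi_succ_eq_det_updateRow_psiMatrix {n β : ℕ} (hβ : β ≤ n) :
    Phi n (β + 1) = ((psiMatrix n β).updateRow (Fin.last n) (uVec n (β + 1))).det := by
  rw [Phi_eq_det_zuMatrix, psiMatrix, updateRow_idem, Nat.add_sub_add_right,
    ← zuMatrix_eq_uVec (z := n - β) (r := Fin.last n) (Nat.succ_pos β) (by simp; omega),
    updateRow_eq_self]

theorem det_updateRow_zuMatrix_eVec {n m α : ℕ} (hm : 1 ≤ m) (hmα : m < α) (hαn : α ≤ n)
    {p : Fin (n + 1)} (hp : (p : ℕ) = n - α + m) :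
    ((zuMatrix n (n + 1 - α)).updateRow p (eVec n)).det = -Ru n m α (Psi n (α - 1)) := by
  have hpl : p ≠ Fin.last n := Fin.ne_of_lt (show (p : ℕ) < n by omega)
  rw [Psi_eq_det_psiMatrix, Ru_det_psiMatrix (β := α - 1) (p := p) hm hmα (by omega) (by omega),
    psiMatrix, show n - (α - 1) = n + 1 - α by omega,
    ← zuMatrix_eq_uVec (z := n + 1 - α) (r := Fin.last n) (k := α) (by omega) (by simp; omega),
    det_updateRow_updateRow_swap _ hpl, neg_neg]

section PluckerTerms

open Fin.NatCast

noncomputable def pluckerTerm (n m α β i : ℕ) : Pzu :=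
  ((zuMatrix n (n + 1 - α)).updateRow (n - α + m : ℕ) (psiMatrix n β i)).det *
    ((psiMatrix n β).updateRow i (uVec n (β + 1))).det

theorem sum_pluckerTerm {n m α β : ℕ} (hm : 1 ≤ m) (hmα : m ≤ α) (hαn : α ≤ n) (hmβ : m ≤ β) :
    Psi n β * Ru n m (β + 1) (Phi n α) = ∑ i ∈ range (n + 1), pluckerTerm n m α β i := by
  rw [Psi_eq_det_psiMatrix, Phi_eq_det_zuMatrix,
    Ru_det_zuMatrix (p := ((n - α + m : ℕ) : Fin (n + 1))) hm (by omega)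
      (by rw [Fin.val_cast_of_lt (by omega)]; omega),
    det_mul_det_updateRow_eq_sum, ← Fin.sum_univ_eq_sum_range]
  simp only [pluckerTerm, Fin.cast_val_eq_self]

theorem pluckerTerm_zRow {n m α β i : ℕ} (hm : 1 ≤ m) (hmα : m ≤ α) (hαβ : α ≤ β)
    (hi : i < n - β) : pluckerTerm n m α β i = 0 := by
  have hi' : ((i : Fin (n + 1)) : ℕ) = i := Fin.val_cast_of_lt (by omega)
  refine mul_eq_zero_of_left ?_ _
  rw [psiMatrix_of_ne_last (Fin.ne_of_lt (show ((i : Fin (n + 1)) : ℕ) < n by omega)),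
    zuMatrix_of_lt (by omega), ← zuMatrix_of_lt (z := n + 1 - α) (by omega)]
  refine det_updateRow_eq_zero fun h => ?_
  have := congrArg Fin.val h
  rw [hi', Fin.val_cast_of_lt (by omega)] at this
  omega

theorem pluckerTerm_uRow_of_le {n m α β j : ℕ} (hj : 1 ≤ j) (hjα : j ≤ α) (hjm : j ≠ m)
    (hmα : m ≤ α) (hαβ : α ≤ β) (hβn : β < n) : pluckerTerm n m α β (n - β + j - 1) = 0 := by
  refine mul_eq_zero_of_left ?_ _
  rw [psiMatrix_eq_uVec hj (Fin.val_cast_of_lt (by omega))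
      (by rw [Fin.val_cast_of_lt (by omega)]; omega),
    ← zuMatrix_eq_uVec (z := n + 1 - α) (r := ((n - α + j : ℕ) : Fin (n + 1))) hj
      (by rw [Fin.val_cast_of_lt (by omega)]; omega)]
  refine det_updateRow_eq_zero fun h => ?_
  have := congrArg Fin.val h
  rw [Fin.val_cast_of_lt (by omega), Fin.val_cast_of_lt (by omega)] at this
  omega

theorem pluckerTerm_uRow_self {n m α β : ℕ} (hm : 1 ≤ m) (hmα : m ≤ α) (hαβ : α ≤ β) (hβn : β < n) :
    pluckerTerm n m α β (n - β + m - 1) = Phi n α * Ru n m (β + 1) (Psi n β) := by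
  rw [pluckerTerm, psiMatrix_eq_uVec hm (Fin.val_cast_of_lt (by omega))
      (by rw [Fin.val_cast_of_lt (by omega)]; omega),
    ← zuMatrix_eq_uVec (z := n + 1 - α) (r := ((n - α + m : ℕ) : Fin (n + 1))) hm
      (by rw [Fin.val_cast_of_lt (by omega)]; omega),
    updateRow_eq_self, ← Phi_eq_det_zuMatrix, Psi_eq_det_psiMatrix,
    Ru_det_psiMatrix hm (by omega) (Fin.val_cast_of_lt (by omega))
      (by rw [Fin.val_cast_of_lt (by omega)]; omega)]

theorem pluckerTerm_uRow_of_lt {n m α β j : ℕ} (hm : 1 ≤ m) (hmα : m ≤ α) (hαn : α ≤ n)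
    (hmj : m < j) (hjβ : j ≤ β) (hβn : β < n) :
    pluckerTerm n m α β (n - β + j - 1) = Ru n m j (Phi n α) * Ru n j (β + 1) (Psi n β) := by
  rw [pluckerTerm, psiMatrix_eq_uVec (by omega) (Fin.val_cast_of_lt (by omega))
      (by rw [Fin.val_cast_of_lt (by omega)]; omega),
    Phi_eq_det_zuMatrix, Psi_eq_det_psiMatrix,
    Ru_det_zuMatrix (p := ((n - α + m : ℕ) : Fin (n + 1))) hm hmj
      (by rw [Fin.val_cast_of_lt (by omega)]; omega),
    Ru_det_psiMatrix (by omega) (by omega) (Fin.val_cast_of_lt (by omega))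
      (by rw [Fin.val_cast_of_lt (by omega)]; omega)]

theorem pluckerTerm_last {n m α β : ℕ} (hm : 1 ≤ m) (hmα : m < α) (hαn : α ≤ n) (hβn : β ≤ n) :
    pluckerTerm n m α β n = -Ru n m α (Psi n (α - 1)) * Phi n (β + 1) := by
  rw [pluckerTerm, Fin.natCast_eq_last, psiMatrix_last,
    det_updateRow_zuMatrix_eVec hm hmα hαn (Fin.val_cast_of_lt (by omega)),
    Phi_succ_eq_det_updateRow_psiMatrix hβn]

end PluckerTerms

/-- Plücker quadratic relation (type a). For `m < α ≤ β` (and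
`β + 1 ≤ n`):
`∑_{j=α+1}^{β+1} (R_{mj} Φ_α)(R_{j(β+1)} Ψ_β)
  = −Φ_α · R_{m(β+1)} Ψ_β + Φ_{β+1} · R_{mα} Ψ_{α−1}`,
where the `j = β+1` term uses the convention `R_{(β+1)(β+1)} Ψ_β := −Ψ_β`
(all operators are the Zhelobenko operators in the `u`-variables). -/
theorem plucker_relation_a (n m α β : ℕ) (hm : 1 ≤ m) (hmα : m < α)
    (hαβ : α ≤ β) (hβn : β + 1 ≤ n) :
    (∑ j ∈ Finset.Icc (α + 1) β, Ru n m j (Phi n α) * Ru n j (β + 1) (Psi n β)) +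
        Ru n m (β + 1) (Phi n α) * (-(Psi n β))
      = -(Phi n α) * Ru n m (β + 1) (Psi n β) +
          Phi n (β + 1) * Ru n m α (Psi n (α - 1)) := by
  have key := sum_pluckerTerm (n := n) (β := β) hm hmα.le (by omega) (by omega)
  rw [sum_range_eq_of_eq_zero _ hm hmα.le hαβ (z := n - β) (by omega)
      (fun i hi => pluckerTerm_zRow hm hmα.le hαβ hi)
      (fun j hj hjα hjm => pluckerTerm_uRow_of_le hj hjα hjm hmα.le hαβ (by omega)),
    pluckerTerm_uRow_self hm hmα.le hαβ (by omega),
    sum_congr rfl fun j hj => have hj := mem_Icc.1 hj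
      pluckerTerm_uRow_of_lt hm hmα.le (by omega) (by omega) hj.2 (by omega),
    pluckerTerm_last hm hmα (by omega) (by omega)] at key
  linear_combination -key
end

section
/- Zhelobenko-type vanishing for the kernel: Let r = (r_1 ≥ ... ≥ r_{n+1}) and q = (q_1 ≥ ... ≥ q_n) be interlacing integer signatures (r_j ≥ q_j ≥ r_{j+1}), and define the polynomial kernel L = Φ_1^{q_1−r_2} Ψ_1^{r_2−q_2} Φ_2^{q_2−r_3} Ψ_2^{r_3−q_3} ⋯ Φ_n^{q_n−r_{n+1}} in the variables z_{ij} (1 ≤ i < j ≤ n+1) and u_{kl} (1 ≤ k < l ≤ n), where Φ_α and Ψ_α are the determinants defined from the generic unipotent matrices Z, U. Let p = r* = (−r_{n+1}, ..., −r_1) be the dual signature. Then for each k = 1, ..., n, (R^z_{k(k+1)})^{p_k − p_{k+1} + 1} L = 0, where R^z_{k(k+1)} is the z-variable Zhelobenko operator. -/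
open MvPolynomial

/- ===== auxiliary machinery ===== -/


section DerivLemmas
variable (D : Derivation ℂ Pzu Pzu)

theorem D_prod {ι : Type} [DecidableEq ι] (s : Finset ι) (f : ι → Pzu) :
    D (∏ i ∈ s, f i) = ∑ i ∈ s, (∏ j ∈ s.erase i, f j) * D (f i) := by
  induction s using Finset.induction with
  | empty => simp
  | @insert a s ha ih =>
    rw [Finset.prod_insert ha, D.leibniz, smul_eq_mul, smul_eq_mul, ih,
      Finset.sum_insert ha, Finset.erase_insert ha, Finset.mul_sum, add_comm]
    congr 1
    exact Finset.sum_congr rfl fun i hi => by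
      rw [Finset.erase_insert_of_ne (fun h : a = i => ha (h ▸ hi)),
        Finset.prod_insert (fun h => ha (Finset.mem_of_mem_erase h))]
      ring

theorem D_det {m : ℕ} (M : Matrix (Fin m) (Fin m) Pzu) :
    D M.det = ∑ t, (M.updateRow t fun j => D (M t j)).det := by
  classical
  have rhs : ∀ t : Fin m, (M.updateRow t fun j => D (M t j)).det
      = ∑ σ : Equiv.Perm (Fin m), Equiv.Perm.sign σ •
          (D (M t (σ.symm t)) * ∏ i ∈ Finset.univ.erase (σ.symm t), M (σ i) i) := by
    intro t
    rw [Matrix.det_apply]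
    refine Finset.sum_congr rfl fun σ _ => ?_
    congr 1
    rw [← Finset.mul_prod_erase Finset.univ _ (Finset.mem_univ (σ.symm t))]
    congr 1
    · rw [show σ (σ.symm t) = t from σ.apply_symm_apply t, Matrix.updateRow_self]
    · refine Finset.prod_congr rfl fun i hi => ?_
      refine congrFun (Matrix.updateRow_ne ?_) i
      intro h
      exact (Finset.mem_erase.mp hi).1 (by rw [← h, Equiv.symm_apply_apply])
  have step : ∀ σ : Equiv.Perm (Fin m),
      D (Equiv.Perm.sign σ • ∏ i, M (σ i) i)
        = Equiv.Perm.sign σ • ∑ j, (∏ i ∈ Finset.univ.erase j, M (σ i) i) * D (M (σ j) j) := by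
    intro σ
    rw [Units.smul_def, Units.smul_def, ← Int.cast_smul_eq_zsmul ℂ, ← Int.cast_smul_eq_zsmul ℂ,
      D.map_smul, D_prod]
  rw [Matrix.det_apply, map_sum, Finset.sum_congr rfl fun σ _ => step σ,
    Finset.sum_congr rfl fun t (_ : t ∈ Finset.univ) => rhs t, Finset.sum_comm]
  refine Finset.sum_congr rfl fun σ _ => ?_
  rw [Finset.smul_sum]
  rw [← Equiv.sum_comp σ (fun t => Equiv.Perm.sign σ •
      (D (M t (σ.symm t)) * ∏ i ∈ Finset.univ.erase (σ.symm t), M (σ i) i))]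
  refine Finset.sum_congr rfl fun j _ => ?_
  rw [Equiv.symm_apply_apply, mul_comm]
end DerivLemmas

section Iter
variable (D : Derivation ℂ Pzu Pzu)

theorem iter_zero (m : ℕ) : (⇑D)^[m] 0 = 0 := Function.iterate_fixed (map_zero D) m

theorem iter_add (m : ℕ) (x y : Pzu) : (⇑D)^[m] (x + y) = (⇑D)^[m] x + (⇑D)^[m] y := by
  induction m generalizing x y with
  | zero => rfl
  | succ m ih => rw [Function.iterate_succ_apply, Function.iterate_succ_apply,
      Function.iterate_succ_apply, map_add, ih]

theorem iter_mul (N : ℕ) : ∀ s t F G, s + t ≤ N → (⇑D)^[s+1] F = 0 → (⇑D)^[t+1] G = 0 →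
    (⇑D)^[s+t+1] (F * G) = 0 := by
  induction N with
  | zero =>
    intro s t F G h hF hG
    obtain ⟨rfl, rfl⟩ : s = 0 ∧ t = 0 := by omega
    have hF' : D F = 0 := hF
    have hG' : D G = 0 := hG
    show D (F * G) = 0
    rw [D.leibniz, smul_eq_mul, smul_eq_mul, hF', hG', mul_zero, mul_zero, add_zero]
  | succ N ih =>
    intro s t F G h hF hG
    by_cases h' : s + t ≤ N
    · exact ih s t F G h' hF hG
    rw [Function.iterate_succ_apply, D.leibniz, smul_eq_mul, smul_eq_mul, iter_add]
    have h1 : (⇑D)^[s+t] (F * D G) = 0 := by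
      rcases t with _ | t'
      · have hG' : D G = 0 := by simpa using hG
        rw [hG', mul_zero, iter_zero]
      · have := ih s t' F (D G) (by omega) hF
          (by rw [← Function.iterate_succ_apply]; exact hG)
        have e : s + (t' + 1) = s + t' + 1 := by omega
        rw [e]; exact this
    have h2 : (⇑D)^[s+t] (G * D F) = 0 := by
      rcases s with _ | s'
      · have hF' : D F = 0 := by simpa using hF
        rw [hF', mul_zero, iter_zero]
      · have := ih t s' G (D F) (by omega) hG
          (by rw [← Function.iterate_succ_apply]; exact hF)
        have e : s' + 1 + t = t + s' + 1 := by omega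
        rw [e]; exact this
    rw [h1, h2, add_zero]

theorem iter_pow (f : Pzu) (hf : D (D f) = 0) (e : ℕ) : (⇑D)^[e+1] (f ^ e) = 0 := by
  induction e with
  | zero =>
    show D (f ^ 0) = 0
    rw [pow_zero]; exact D.map_one_eq_zero
  | succ e ih =>
    have h2 : (⇑D)^[1+1] f = 0 := by
      rw [Function.iterate_succ_apply, Function.iterate_one]; exact hf
    have := iter_mul D (1 + e) 1 e f (f ^ e) le_rfl h2 ih
    rw [pow_succ, mul_comm]
    have e1 : e + 1 + 1 = 1 + e + 1 := by omega
    rw [e1]; exact this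

theorem D_pow_zero (f : Pzu) (h : D f = 0) (e : ℕ) : D (f ^ e) = 0 := by
  rw [D.leibniz_pow, h, smul_zero, smul_zero]

theorem D_prod_zero {ι : Type} [DecidableEq ι] (s : Finset ι) (f : ι → Pzu)
    (h : ∀ i ∈ s, D (f i) = 0) : D (∏ i ∈ s, f i) = 0 := by
  rw [D_prod]
  exact Finset.sum_eq_zero fun i hi => by rw [h i hi, mul_zero]

theorem iter_vanish (c f g : Pzu) (a b m : ℕ) (hc : D c = 0) (hf : D (D f) = 0)
    (hg : D (D g) = 0) (hm : a + b + 1 ≤ m) : (⇑D)^[m] (c * (f ^ a * g ^ b)) = 0 := by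
  have h1 : (⇑D)^[a+b+1] (f ^ a * g ^ b) = 0 :=
    iter_mul D (a+b) a b _ _ le_rfl (iter_pow D f hf a) (iter_pow D g hg b)
  have h2 : (⇑D)^[a+b+1] (c * (f ^ a * g ^ b)) = 0 := by
    have := iter_mul D (a+b) 0 (a+b) c (f ^ a * g ^ b) (by omega)
      (by simpa using hc) h1
    have e : a + b + 1 = 0 + (a + b) + 1 := by omega
    rw [e]; exact this
  rw [show m = (m - (a+b+1)) + (a+b+1) by omega, Function.iterate_add_apply, h2, iter_zero]
end Iter

noncomputable def RzD (n k l : ℕ) : Derivation ℂ Pzu Pzu :=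
  pderiv (Sum.inl (k, l)) +
    ∑ j ∈ Finset.Icc (l + 1) (n + 1), zv l j • pderiv (Sum.inl (k, j))

theorem Derivation.sum_apply' {ι : Type} (s : Finset ι) (f : ι → Derivation ℂ Pzu Pzu)
    (p : Pzu) : (∑ i ∈ s, f i) p = ∑ i ∈ s, f i p := by
  induction s using Finset.cons_induction with
  | empty => simp
  | cons a s ha ih => rw [Finset.sum_cons, Finset.sum_cons, Derivation.add_apply, ih]

theorem RzD_apply (n k l : ℕ) (p : Pzu) : RzD n k l p = Rz n k l p := by
  rw [RzD, Rz, Derivation.add_apply, Derivation.sum_apply']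
  rfl

theorem RzD_zv_ne (n k l i j : ℕ) (h : i ≠ k) : RzD n k l (zv i j) = 0 := by
  rw [RzD, zv, Derivation.add_apply, Derivation.sum_apply']
  rw [pderiv_X_of_ne (by simp [h]), Finset.sum_eq_zero, add_zero]
  intro j' _
  rw [Derivation.smul_apply, pderiv_X_of_ne (by simp [h]), smul_zero]

theorem RzD_uv (n k l i j : ℕ) : RzD n k l (uv i j) = 0 := by
  rw [RzD, uv, Derivation.add_apply, Derivation.sum_apply']
  rw [pderiv_X_of_ne (by simp), Finset.sum_eq_zero, add_zero]
  intro j' _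
  rw [Derivation.smul_apply, pderiv_X_of_ne (by simp), smul_zero]

theorem RzD_Zrow_ne (n k l i j : ℕ) (h : i ≠ k) : RzD n k l (Zrow i j) = 0 := by
  rw [Zrow]
  split_ifs
  · exact (RzD n k l).map_one_eq_zero
  · exact RzD_zv_ne n k l i j h
  · exact map_zero _

theorem RzD_Urow (n k l i j : ℕ) : RzD n k l (Urow i j) = 0 := by
  rw [Urow]
  split_ifs
  · exact (RzD n k l).map_one_eq_zero
  · exact RzD_uv n k l i j
  · exact map_zero _

theorem RzD_UextRow (n k l m i j : ℕ) : RzD n k l (UextRow m i j) = 0 := by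
  rw [UextRow]
  split_ifs
  · exact RzD_Urow n k l i j
  · exact map_zero _

theorem RzD_Zrow_k (n k j : ℕ) (hk : 1 ≤ k) (hj : j ≤ n + 1) :
    RzD n k (k + 1) (Zrow k j) = Zrow (k + 1) j := by
  by_cases h0 : j < k
  · rw [show Zrow k j = 0 by rw [Zrow, if_neg (by omega), if_neg (by omega)], map_zero,
      Zrow, if_neg (by omega), if_neg (by omega)]
  by_cases h1 : j = k
  · subst h1
    rw [show Zrow j j = 1 by rw [Zrow, if_pos rfl], (RzD n j (j + 1)).map_one_eq_zero,
      Zrow, if_neg (by omega), if_neg (by omega)]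
  have hgt : k < j := by omega
  rw [show Zrow k j = zv k j by rw [Zrow, if_neg (by omega), if_pos hgt]]
  rw [RzD, zv, Derivation.add_apply, Derivation.sum_apply']
  have hsmul : ∀ j' : ℕ, j' ≠ j →
      (zv (k + 1) j' • pderiv (Sum.inl (k, j'))) (X (Sum.inl (k, j)) : Pzu) = 0 := by
    intro j' hne
    have hx : (Sum.inl (k, j) : (ℕ × ℕ) ⊕ (ℕ × ℕ)) ≠ Sum.inl (k, j') := by
      simp only [ne_eq, Sum.inl.injEq, Prod.mk.injEq]
      omega
    rw [Derivation.smul_apply, pderiv_X_of_ne hx, smul_zero]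
  by_cases h2 : j = k + 1
  · subst h2
    rw [pderiv_X_self, Finset.sum_eq_zero fun j' hj' =>
      hsmul j' (by simp only [Finset.mem_Icc] at hj'; omega), add_zero, Zrow, if_pos rfl]
  · have hxx : (Sum.inl (k, j) : (ℕ × ℕ) ⊕ (ℕ × ℕ)) ≠ Sum.inl (k, k + 1) := by
      simp only [ne_eq, Sum.inl.injEq, Prod.mk.injEq]
      omega
    rw [pderiv_X_of_ne hxx, zero_add]
    rw [Finset.sum_eq_single_of_mem j (Finset.mem_Icc.mpr ⟨by omega, hj⟩)]
    · rw [Derivation.smul_apply, pderiv_X_self, smul_eq_mul, mul_one,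
        Zrow, if_neg (by omega), if_pos (by omega), zv]
    · exact fun j' _ hne => hsmul j' hne

noncomputable def Mphi (n α : ℕ) : Matrix (Fin (n + 1)) (Fin (n + 1)) Pzu :=
  Matrix.of fun a b : Fin (n + 1) =>
    if (a : ℕ) + 1 ≤ n + 1 - α then Zrow ((a : ℕ) + 1) ((b : ℕ) + 1)
    else UextRow n ((a : ℕ) + 1 - (n + 1 - α)) ((b : ℕ) + 1)

noncomputable def Mpsi (n α : ℕ) : Matrix (Fin n) (Fin n) Pzu :=
  Matrix.of fun a b : Fin n =>
    if (a : ℕ) + 1 ≤ n - α then Zrow ((a : ℕ) + 1) ((b : ℕ) + 1)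
    else Urow ((a : ℕ) + 1 - (n - α)) ((b : ℕ) + 1)

theorem Phi_eq (n α : ℕ) : Phi n α = (Mphi n α).det := rfl
theorem Psi_eq (n α : ℕ) : Psi n α = (Mpsi n α).det := rfl

theorem DPhi_entry_zero (n k α : ℕ) (i j : Fin (n + 1)) (hik : (i : ℕ) + 1 ≠ k) :
    RzD n k (k + 1) (Mphi n α i j) = 0 := by
  show RzD n k (k + 1) (if (i : ℕ) + 1 ≤ n + 1 - α then Zrow ((i : ℕ) + 1) ((j : ℕ) + 1)
    else UextRow n ((i : ℕ) + 1 - (n + 1 - α)) ((j : ℕ) + 1)) = 0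
  split_ifs
  · exact RzD_Zrow_ne _ _ _ _ _ hik
  · exact RzD_UextRow _ _ _ _ _ _

theorem DPsi_entry_zero (n k α : ℕ) (i j : Fin n) (hik : (i : ℕ) + 1 ≠ k) :
    RzD n k (k + 1) (Mpsi n α i j) = 0 := by
  show RzD n k (k + 1) (if (i : ℕ) + 1 ≤ n - α then Zrow ((i : ℕ) + 1) ((j : ℕ) + 1)
    else Urow ((i : ℕ) + 1 - (n - α)) ((j : ℕ) + 1)) = 0
  split_ifs
  · exact RzD_Zrow_ne _ _ _ _ _ hik
  · exact RzD_Urow _ _ _ _ _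

theorem DPhi_zero (n k α : ℕ) (hk1 : 1 ≤ k) (hk2 : k ≤ n) (hα1 : 1 ≤ α) (hαn : α ≤ n)
    (hne : α ≠ n + 1 - k) : RzD n k (k + 1) (Phi n α) = 0 := by
  rw [Phi_eq, D_det]
  refine Finset.sum_eq_zero fun i _ => ?_
  by_cases hik : (i : ℕ) + 1 = k
  · by_cases hkα : k ≤ n + 1 - α
    · have hk' : k + 1 ≤ n + 1 - α := by omega
      refine Matrix.det_zero_of_row_eq (i := i) (j := ⟨k, by omega⟩)
        (fun h => by have := congrArg Fin.val h; simp at this; omega) ?_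
      funext j
      rw [Matrix.updateRow_self, Matrix.updateRow_ne
        (fun h => by have := congrArg Fin.val h; simp at this; omega)]
      show RzD n k (k + 1) (Mphi n α i j) = Mphi n α ⟨k, by omega⟩ j
      have e1 : Mphi n α i j = Zrow k ((j : ℕ) + 1) := by
        show (if (i : ℕ) + 1 ≤ n + 1 - α then Zrow ((i : ℕ) + 1) ((j : ℕ) + 1) else _) = _
        rw [if_pos (by omega), hik]
      have e2 : Mphi n α ⟨k, by omega⟩ j = Zrow (k + 1) ((j : ℕ) + 1) := by
        show (if k + 1 ≤ n + 1 - α then Zrow (k + 1) ((j : ℕ) + 1) else _) = _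
        rw [if_pos hk']
      rw [e1, e2]
      exact RzD_Zrow_k n k ((j : ℕ) + 1) hk1 (by omega)
    · refine Matrix.det_eq_zero_of_row_eq_zero i fun j => ?_
      rw [Matrix.updateRow_self]
      show RzD n k (k + 1) (Mphi n α i j) = 0
      have e1 : Mphi n α i j = UextRow n ((i : ℕ) + 1 - (n + 1 - α)) ((j : ℕ) + 1) := by
        show (if (i : ℕ) + 1 ≤ n + 1 - α then _ else _) = _
        rw [if_neg (by omega)]
      rw [e1]
      exact RzD_UextRow _ _ _ _ _ _
  · refine Matrix.det_eq_zero_of_row_eq_zero i fun j => ?_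
    rw [Matrix.updateRow_self]
    exact DPhi_entry_zero n k α i j hik

theorem DPsi_zero (n k α : ℕ) (hk1 : 1 ≤ k) (hk2 : k ≤ n) (hα1 : 1 ≤ α) (hαn : α ≤ n - 1)
    (hne : α ≠ n - k) : RzD n k (k + 1) (Psi n α) = 0 := by
  rw [Psi_eq, D_det]
  refine Finset.sum_eq_zero fun i _ => ?_
  by_cases hik : (i : ℕ) + 1 = k
  · by_cases hkα : k ≤ n - α
    · have hk' : k + 1 ≤ n - α := by omega
      refine Matrix.det_zero_of_row_eq (i := i) (j := ⟨k, by omega⟩)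
        (fun h => by have := congrArg Fin.val h; simp at this; omega) ?_
      funext j
      rw [Matrix.updateRow_self, Matrix.updateRow_ne
        (fun h => by have := congrArg Fin.val h; simp at this; omega)]
      show RzD n k (k + 1) (Mpsi n α i j) = Mpsi n α ⟨k, by omega⟩ j
      have e1 : Mpsi n α i j = Zrow k ((j : ℕ) + 1) := by
        show (if (i : ℕ) + 1 ≤ n - α then Zrow ((i : ℕ) + 1) ((j : ℕ) + 1) else _) = _
        rw [if_pos (by omega), hik]
      have e2 : Mpsi n α ⟨k, by omega⟩ j = Zrow (k + 1) ((j : ℕ) + 1) := by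
        show (if k + 1 ≤ n - α then Zrow (k + 1) ((j : ℕ) + 1) else _) = _
        rw [if_pos hk']
      rw [e1, e2]
      exact RzD_Zrow_k n k ((j : ℕ) + 1) hk1 (by omega)
    · refine Matrix.det_eq_zero_of_row_eq_zero i fun j => ?_
      rw [Matrix.updateRow_self]
      show RzD n k (k + 1) (Mpsi n α i j) = 0
      have e1 : Mpsi n α i j = Urow ((i : ℕ) + 1 - (n - α)) ((j : ℕ) + 1) := by
        show (if (i : ℕ) + 1 ≤ n - α then _ else _) = _
        rw [if_neg (by omega)]
      rw [e1]
      exact RzD_Urow _ _ _ _ _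
  · refine Matrix.det_eq_zero_of_row_eq_zero i fun j => ?_
    rw [Matrix.updateRow_self]
    exact DPsi_entry_zero n k α i j hik

theorem DDPhi (n k : ℕ) (hk1 : 1 ≤ k) (hk2 : k ≤ n) :
    RzD n k (k + 1) (RzD n k (k + 1) (Phi n (n + 1 - k))) = 0 := by
  rw [Phi_eq, D_det, map_sum]
  refine Finset.sum_eq_zero fun i _ => ?_
  by_cases hik : (i : ℕ) + 1 = k
  · rw [D_det]
    refine Finset.sum_eq_zero fun t _ => ?_
    refine Matrix.det_eq_zero_of_row_eq_zero t fun j => ?_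
    rw [Matrix.updateRow_self]
    by_cases hti : t = i
    · subst hti
      rw [Matrix.updateRow_self]
      show RzD n k (k + 1) (RzD n k (k + 1) (Mphi n (n + 1 - k) t j)) = 0
      have e1 : Mphi n (n + 1 - k) t j = Zrow k ((j : ℕ) + 1) := by
        show (if (t : ℕ) + 1 ≤ n + 1 - (n + 1 - k) then Zrow ((t : ℕ) + 1) ((j : ℕ) + 1)
          else _) = _
        rw [if_pos (by omega), hik]
      rw [e1, RzD_Zrow_k n k ((j : ℕ) + 1) hk1 (by omega)]
      exact RzD_Zrow_ne _ _ _ _ _ (by omega)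
    · rw [Matrix.updateRow_ne hti]
      exact DPhi_entry_zero n k _ t j
        (fun h => hti (Fin.val_injective (by omega)))
  · have hzero : ((Mphi n (n + 1 - k)).updateRow i
        fun j => RzD n k (k + 1) (Mphi n (n + 1 - k) i j)).det = 0 :=
      Matrix.det_eq_zero_of_row_eq_zero i fun j => by
        rw [Matrix.updateRow_self]; exact DPhi_entry_zero n k _ i j hik
    rw [hzero, map_zero]

theorem DDPsi (n k : ℕ) (hk1 : 1 ≤ k) (hk2 : k ≤ n) :
    RzD n k (k + 1) (RzD n k (k + 1) (Psi n (n - k))) = 0 := by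
  rw [Psi_eq, D_det, map_sum]
  refine Finset.sum_eq_zero fun i _ => ?_
  by_cases hik : (i : ℕ) + 1 = k
  · rw [D_det]
    refine Finset.sum_eq_zero fun t _ => ?_
    refine Matrix.det_eq_zero_of_row_eq_zero t fun j => ?_
    rw [Matrix.updateRow_self]
    by_cases hti : t = i
    · subst hti
      rw [Matrix.updateRow_self]
      show RzD n k (k + 1) (RzD n k (k + 1) (Mpsi n (n - k) t j)) = 0
      have e1 : Mpsi n (n - k) t j = Zrow k ((j : ℕ) + 1) := by
        show (if (t : ℕ) + 1 ≤ n - (n - k) then Zrow ((t : ℕ) + 1) ((j : ℕ) + 1)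
          else _) = _
        rw [if_pos (by omega), hik]
      rw [e1, RzD_Zrow_k n k ((j : ℕ) + 1) hk1 (by omega)]
      exact RzD_Zrow_ne _ _ _ _ _ (by omega)
    · rw [Matrix.updateRow_ne hti]
      exact DPsi_entry_zero n k _ t j
        (fun h => hti (Fin.val_injective (by omega)))
  · have hzero : ((Mpsi n (n - k)).updateRow i
        fun j => RzD n k (k + 1) (Mpsi n (n - k) i j)).det = 0 :=
      Matrix.det_eq_zero_of_row_eq_zero i fun j => by
        rw [Matrix.updateRow_self]; exact DPsi_entry_zero n k _ i j hik
    rw [hzero, map_zero]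

theorem D_mul_zero (D : Derivation ℂ Pzu Pzu) (x y : Pzu) (hx : D x = 0) (hy : D y = 0) :
    D (x * y) = 0 := by
  rw [D.leibniz, hx, hy, smul_zero, smul_zero, add_zero]

/-- Zhelobenko-type vanishing for the kernel. For interlacing
integer signatures `r_1 ≥ q_1 ≥ r_2 ≥ … ≥ q_n ≥ r_{n+1}`, the polynomial kernel
`L = Φ_1^{q_1−r_2} Ψ_1^{r_2−q_2} Φ_2^{q_2−r_3} ⋯ Φ_n^{q_n−r_{n+1}}` is
annihilated by `(R^z_{k(k+1)})^{p_k − p_{k+1} + 1}` for each `k = 1, …, n`,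
where `p = r^* = (−r_{n+1}, …, −r_1)` is the dual signature,
i.e. `p_k = −r_{n+2−k}`. -/
theorem zhelobenko_vanishing_kernel (n : ℕ) (hn : 1 ≤ n) (q r : ℕ → ℤ)
    (hinter : ∀ j, 1 ≤ j → j ≤ n → r j ≥ q j ∧ q j ≥ r (j + 1)) :
    ∀ k : ℕ, 1 ≤ k → k ≤ n →
      (Rz n k (k + 1))^[((-r (n + 2 - k)) - (-r (n + 1 - k)) + 1).toNat]
        ((∏ α ∈ Finset.Icc 1 n, Phi n α ^ (q α - r (α + 1)).toNat) *
          ∏ α ∈ Finset.Icc 1 (n - 1), Psi n α ^ (r (α + 1) - q (α + 1)).toNat)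
        = 0 := by
  intro k hk1 hk2
  have hfun : Rz n k (k + 1) = ⇑(RzD n k (k + 1)) :=
    funext fun p => (RzD_apply n k (k + 1) p).symm
  rw [hfun]
  obtain ⟨h1, h2⟩ := hinter (n + 1 - k) (by omega) (by omega)
  have e2 : n + 1 - k + 1 = n + 2 - k := by omega
  rw [e2] at h2
  have hα₀ : n + 1 - k ∈ Finset.Icc 1 n := Finset.mem_Icc.mpr ⟨by omega, by omega⟩
  rw [← Finset.mul_prod_erase _ _ hα₀, e2]
  have hDF : RzD n k (k + 1) (∏ α ∈ (Finset.Icc 1 n).erase (n + 1 - k),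
      Phi n α ^ (q α - r (α + 1)).toNat) = 0 := by
    refine D_prod_zero _ _ _ fun α hα => ?_
    obtain ⟨hne, hmem⟩ := Finset.mem_erase.mp hα
    obtain ⟨g1, g2⟩ := Finset.mem_Icc.mp hmem
    exact D_pow_zero _ _ (DPhi_zero n k α hk1 hk2 g1 g2 hne) _
  by_cases hkn : k = n
  · have hDG : RzD n k (k + 1) (∏ α ∈ Finset.Icc 1 (n - 1),
        Psi n α ^ (r (α + 1) - q (α + 1)).toNat) = 0 := by
      refine D_prod_zero _ _ _ fun α hα => ?_
      obtain ⟨g1, g2⟩ := Finset.mem_Icc.mp hα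
      exact D_pow_zero _ _ (DPsi_zero n k α hk1 hk2 g1 g2 (by omega)) _
    rw [show (Phi n (n + 1 - k) ^ (q (n + 1 - k) - r (n + 2 - k)).toNat *
        ∏ α ∈ (Finset.Icc 1 n).erase (n + 1 - k), Phi n α ^ (q α - r (α + 1)).toNat) *
        ∏ α ∈ Finset.Icc 1 (n - 1), Psi n α ^ (r (α + 1) - q (α + 1)).toNat =
        ((∏ α ∈ (Finset.Icc 1 n).erase (n + 1 - k), Phi n α ^ (q α - r (α + 1)).toNat) *
        ∏ α ∈ Finset.Icc 1 (n - 1), Psi n α ^ (r (α + 1) - q (α + 1)).toNat) *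
        (Phi n (n + 1 - k) ^ (q (n + 1 - k) - r (n + 2 - k)).toNat * (1 : Pzu) ^ 0) by ring]
    refine iter_vanish _ _ _ _ _ _ _ (D_mul_zero _ _ _ hDF hDG) (DDPhi n k hk1 hk2) ?_ ?_
    · rw [(RzD n k (k + 1)).map_one_eq_zero, map_zero]
    · omega
  · have hβ₀ : n - k ∈ Finset.Icc 1 (n - 1) := Finset.mem_Icc.mpr ⟨by omega, by omega⟩
    rw [← Finset.mul_prod_erase _ _ hβ₀, show n - k + 1 = n + 1 - k by omega]
    have hDG : RzD n k (k + 1) (∏ α ∈ (Finset.Icc 1 (n - 1)).erase (n - k),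
        Psi n α ^ (r (α + 1) - q (α + 1)).toNat) = 0 := by
      refine D_prod_zero _ _ _ fun α hα => ?_
      obtain ⟨hne, hmem⟩ := Finset.mem_erase.mp hα
      obtain ⟨g1, g2⟩ := Finset.mem_Icc.mp hmem
      exact D_pow_zero _ _ (DPsi_zero n k α hk1 hk2 g1 g2 hne) _
    rw [show (Phi n (n + 1 - k) ^ (q (n + 1 - k) - r (n + 2 - k)).toNat *
        ∏ α ∈ (Finset.Icc 1 n).erase (n + 1 - k), Phi n α ^ (q α - r (α + 1)).toNat) *
        (Psi n (n - k) ^ (r (n + 1 - k) - q (n + 1 - k)).toNat *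
        ∏ α ∈ (Finset.Icc 1 (n - 1)).erase (n - k), Psi n α ^ (r (α + 1) - q (α + 1)).toNat) =
        ((∏ α ∈ (Finset.Icc 1 n).erase (n + 1 - k), Phi n α ^ (q α - r (α + 1)).toNat) *
        ∏ α ∈ (Finset.Icc 1 (n - 1)).erase (n - k), Psi n α ^ (r (α + 1) - q (α + 1)).toNat) *
        (Phi n (n + 1 - k) ^ (q (n + 1 - k) - r (n + 2 - k)).toNat *
         Psi n (n - k) ^ (r (n + 1 - k) - q (n + 1 - k)).toNat) by ring]
    exact iter_vanish _ _ _ _ _ _ _ (D_mul_zero _ _ _ hDF hDG) (DDPhi n k hk1 hk2)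
      (DDPsi n k hk1 hk2) (by omega)
end
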